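/- For every (t, x) ∈ [0, T) × (0, ∞), the Black–Scholes European put value V_E satisfies the Black–Scholes partial differential equation: ∂_t V_E(t,x) + (1/2) σ² x² ∂²_{xx} V_E(t,x) + ρ x ∂_x V_E(t,x) − ρ V_E(t,x) = 0. -/

import Mathlib

open MeasureTheory

/-- Standard normal cumulative distribution function. -/
noncomputable def stdNormCDF (y : ℝ) : ℝ :=
  (Real.sqrt (2 * Real.pi))⁻¹ * ∫ z in Set.Iic y, Real.exp (-z ^ 2 / 2)

/-- `d₊(t,x)` in the Black–Scholes formula. -/
noncomputable def dPlus (ρ σ Γ T t x : ℝ) : ℝ :=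
  (Real.log (x / Γ) + (ρ + σ ^ 2 / 2) * (T - t)) / (σ * Real.sqrt (T - t))

/-- `d₋(t,x)` in the Black–Scholes formula. -/
noncomputable def dMinus (ρ σ Γ T t x : ℝ) : ℝ :=
  (Real.log (x / Γ) + (ρ - σ ^ 2 / 2) * (T - t)) / (σ * Real.sqrt (T - t))

/-- Black–Scholes value of a European put with strike `Γ` and maturity `T`. -/
noncomputable def euroPut (ρ σ Γ T t x : ℝ) : ℝ :=
  Γ * Real.exp (-ρ * (T - t)) * stdNormCDF (-(dMinus ρ σ Γ T t x))
    - x * stdNormCDF (-(dPlus ρ σ Γ T t x))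

/-!
Write `τ = T - t` and `φ = N'`. Since `d₋ = d₊ - σ√τ`, completing the square gives
`Γ e^{-ρτ} φ(d₋) = x φ(d₊)`. This makes the `φ`-terms cancel in the derivatives of `V_E`:
`∂ₓV_E = -N(-d₊)`, `∂²ₓₓV_E = φ(d₊) / (xσ√τ)` and `∂ₜV_E = ρΓe^{-ρτ}N(-d₋) - σxφ(d₊) / (2√τ)`,
after which the PDE is an algebraic identity.
-/

noncomputable def stdNormPDF (y : ℝ) : ℝ :=
  (Real.sqrt (2 * Real.pi))⁻¹ * Real.exp (-y ^ 2 / 2)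

lemma integrable_exp_neg_sq_div_two : Integrable fun z : ℝ => Real.exp (-z ^ 2 / 2) := by
  simpa only [neg_mul, one_div, ← div_eq_inv_mul, neg_div] using
    integrable_exp_neg_mul_sq (by norm_num : (0 : ℝ) < 1 / 2)

lemma hasDerivAt_stdNormCDF (y : ℝ) : HasDerivAt stdNormCDF (stdNormPDF y) y := by
  have hint := integrable_exp_neg_sq_div_two
  have hcont : Continuous fun z : ℝ => Real.exp (-z ^ 2 / 2) := by fun_prop
  have hsplit : stdNormCDF = fun w => (Real.sqrt (2 * Real.pi))⁻¹ *
      ((∫ z in Set.Iic 0, Real.exp (-z ^ 2 / 2)) + ∫ z in (0 : ℝ)..w, Real.exp (-z ^ 2 / 2)) := by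
    funext w
    rw [stdNormCDF, ← intervalIntegral.integral_Iic_sub_Iic hint.integrableOn hint.integrableOn]
    ring
  rw [hsplit]
  exact ((intervalIntegral.integral_hasDerivAt_right hint.intervalIntegrable
    hcont.stronglyMeasurable.stronglyMeasurableAtFilter hcont.continuousAt).const_add _).const_mul _

lemma HasDerivAt.stdNormCDF_neg {f : ℝ → ℝ} {f' x : ℝ} (hf : HasDerivAt f f' x) :
    HasDerivAt (fun y => stdNormCDF (-f y)) (-(stdNormPDF (f x) * f')) x := by
  have h := (hasDerivAt_stdNormCDF (-f x)).comp x hf.neg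
  rwa [stdNormPDF, neg_sq, ← stdNormPDF, mul_neg] at h

section BlackScholes

variable (ρ σ Γ T : ℝ)

lemma dMinus_eq_dPlus_sub (t x : ℝ) :
    dMinus ρ σ Γ T t x = dPlus ρ σ Γ T t x - σ * Real.sqrt (T - t) := by
  -- where `σ * √(T - t) = 0` both sides are `0`, by the convention `a / 0 = 0`
  rcases eq_or_ne (σ * Real.sqrt (T - t)) 0 with h | h
  · simp [dMinus, dPlus, h]
  · have hτ : 0 ≤ T - t := by
      by_contra! hneg
      exact h (by rw [Real.sqrt_eq_zero'.2 hneg.le, mul_zero])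
    rw [dMinus, dPlus, eq_sub_iff_add_eq, div_add' _ _ _ h, mul_mul_mul_comm, ← sq,
      Real.mul_self_sqrt hτ]
    ring_nf

lemma discount_mul_stdNormPDF_dMinus {t x : ℝ} (hσ : σ ≠ 0) (hΓ : 0 < Γ) (ht : t < T)
    (hx : 0 < x) :
    Γ * Real.exp (-ρ * (T - t)) * stdNormPDF (dMinus ρ σ Γ T t x)
      = x * stdNormPDF (dPlus ρ σ Γ T t x) := by
  have hτ : 0 < T - t := sub_pos.2 ht
  have hq2 : Real.sqrt (T - t) ^ 2 = T - t := Real.sq_sqrt hτ.le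
  have hd : dPlus ρ σ Γ T t x * (σ * Real.sqrt (T - t))
      = Real.log (x / Γ) + (ρ + σ ^ 2 / 2) * (T - t) :=
    div_mul_cancel₀ _ (by positivity)
  have hexp : -dMinus ρ σ Γ T t x ^ 2 / 2
      = -dPlus ρ σ Γ T t x ^ 2 / 2 + Real.log (x / Γ) + ρ * (T - t) := by
    rw [dMinus_eq_dPlus_sub]
    linear_combination hd - σ ^ 2 / 2 * hq2
  rw [stdNormPDF, stdNormPDF, hexp, Real.exp_add, Real.exp_add, Real.exp_log (by positivity),
    neg_mul, Real.exp_neg]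
  field_simp

lemma hasDerivAt_dPlus_space (t : ℝ) {x : ℝ} (hΓ : Γ ≠ 0) (hx : x ≠ 0) :
    HasDerivAt (fun y => dPlus ρ σ Γ T t y) (1 / (x * (σ * Real.sqrt (T - t)))) x := by
  have hlog := ((hasDerivAt_id' x).div_const Γ).log (div_ne_zero hx hΓ)
  refine ((hlog.add_const ((ρ + σ ^ 2 / 2) * (T - t))).div_const
    (σ * Real.sqrt (T - t))).congr_deriv ?_
  field_simp

lemma differentiableAt_dPlus_time (x : ℝ) {t : ℝ} (hσ : σ ≠ 0) (ht : t < T) :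
    DifferentiableAt ℝ (fun s => dPlus ρ σ Γ T s x) t := by
  have hτ : T - t ≠ 0 := (sub_pos.2 ht).ne'
  have hden : σ * Real.sqrt (T - t) ≠ 0 := mul_ne_zero hσ (Real.sqrt_ne_zero'.2 (sub_pos.2 ht))
  unfold dPlus
  fun_prop (disch := assumption)

lemma hasDerivAt_euroPut_space {t x : ℝ} (hσ : σ ≠ 0) (hΓ : 0 < Γ) (ht : t < T) (hx : 0 < x) :
    HasDerivAt (fun y => euroPut ρ σ Γ T t y) (-stdNormCDF (-dPlus ρ σ Γ T t x)) x := by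
  have hdPlus := hasDerivAt_dPlus_space ρ σ Γ T t hΓ.ne' hx.ne'
  have hdMinus :
      HasDerivAt (fun y => dMinus ρ σ Γ T t y) (1 / (x * (σ * Real.sqrt (T - t)))) x := by
    simpa only [dMinus_eq_dPlus_sub] using hdPlus.sub_const (σ * Real.sqrt (T - t))
  refine ((hdMinus.stdNormCDF_neg.const_mul (Γ * Real.exp (-ρ * (T - t)))).fun_sub
    ((hasDerivAt_id' x).fun_mul hdPlus.stdNormCDF_neg)).congr_deriv ?_
  linear_combination (-(1 / (x * (σ * Real.sqrt (T - t)))))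
    * discount_mul_stdNormPDF_dMinus ρ σ Γ T hσ hΓ ht hx

lemma hasDerivAt_deriv_euroPut_space {t x : ℝ} (hσ : σ ≠ 0) (hΓ : 0 < Γ) (ht : t < T)
    (hx : 0 < x) :
    HasDerivAt (deriv fun y => euroPut ρ σ Γ T t y)
      (stdNormPDF (dPlus ρ σ Γ T t x) / (x * (σ * Real.sqrt (T - t)))) x := by
  have hdelta : (deriv fun y => euroPut ρ σ Γ T t y)
      =ᶠ[nhds x] fun y => -stdNormCDF (-dPlus ρ σ Γ T t y) := by
    filter_upwards [Ioi_mem_nhds hx] with y hy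
    exact (hasDerivAt_euroPut_space ρ σ Γ T hσ hΓ ht hy).deriv
  refine HasDerivAt.congr_of_eventuallyEq ?_ hdelta
  refine (hasDerivAt_dPlus_space ρ σ Γ T t hΓ.ne' hx.ne').stdNormCDF_neg.fun_neg.congr_deriv ?_
  ring

lemma hasDerivAt_euroPut_time {t x : ℝ} (hσ : σ ≠ 0) (hΓ : 0 < Γ) (ht : t < T) (hx : 0 < x) :
    HasDerivAt (fun s => euroPut ρ σ Γ T s x)
      (ρ * Γ * Real.exp (-ρ * (T - t)) * stdNormCDF (-dMinus ρ σ Γ T t x)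
        - σ * x * stdNormPDF (dPlus ρ σ Γ T t x) / (2 * Real.sqrt (T - t))) t := by
  have hτ : 0 < T - t := sub_pos.2 ht
  have hdPlus := (differentiableAt_dPlus_time ρ σ Γ T x hσ ht).hasDerivAt
  set D := deriv (fun s => dPlus ρ σ Γ T s x) t
  have hsqrt : HasDerivAt (fun s => σ * Real.sqrt (T - s))
      (σ * (1 / (2 * Real.sqrt (T - t)) * (-1))) t :=
    ((Real.hasDerivAt_sqrt hτ.ne').comp t ((hasDerivAt_id t).const_sub T)).const_mul σ
  have hdMinus : HasDerivAt (fun s => dMinus ρ σ Γ T s x)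
      (D - σ * (1 / (2 * Real.sqrt (T - t)) * (-1))) t := by
    simpa only [dMinus_eq_dPlus_sub] using hdPlus.fun_sub hsqrt
  have hdisc : HasDerivAt (fun s => Γ * Real.exp (-ρ * (T - s)))
      (Γ * (Real.exp (-ρ * (T - t)) * (-ρ * -1))) t :=
    ((((hasDerivAt_id t).const_sub T).const_mul (-ρ)).exp).const_mul Γ
  refine ((hdisc.fun_mul hdMinus.stdNormCDF_neg).fun_sub
    (hdPlus.stdNormCDF_neg.const_mul x)).congr_deriv ?_
  linear_combination (-(D + σ / (2 * Real.sqrt (T - t))))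
    * discount_mul_stdNormPDF_dMinus ρ σ Γ T hσ hΓ ht hx

end BlackScholes

theorem stmt_9_general (ρ σ Γ T : ℝ) (hσ : 0 < σ) (hΓ : 0 < Γ)
    (t x : ℝ) (ht : t ∈ Set.Ico (0 : ℝ) T) (hx : 0 < x) :
    deriv (fun s => euroPut ρ σ Γ T s x) t
      + (1 / 2) * σ ^ 2 * x ^ 2 * deriv (deriv (fun y => euroPut ρ σ Γ T t y)) x
      + ρ * x * deriv (fun y => euroPut ρ σ Γ T t y) x
      - ρ * euroPut ρ σ Γ T t x = 0 := by
  have hsqrt : 0 < Real.sqrt (T - t) := Real.sqrt_pos.2 (sub_pos.2 ht.2)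
  rw [(hasDerivAt_euroPut_time ρ σ Γ T hσ.ne' hΓ ht.2 hx).deriv,
    (hasDerivAt_deriv_euroPut_space ρ σ Γ T hσ.ne' hΓ ht.2 hx).deriv,
    (hasDerivAt_euroPut_space ρ σ Γ T hσ.ne' hΓ ht.2 hx).deriv, euroPut]
  field_simp
  ring

/-- The Black–Scholes European put value satisfies the Black–Scholes PDE
`∂_t V_E + (1/2)σ²x²∂²ₓₓV_E + ρx∂ₓV_E − ρV_E = 0` on `[0,T) × (0,∞)`. -/
theorem stmt_9 (ρ σ Γ T : ℝ) (hσ : 0 < σ) (hΓ : 0 < Γ) (hT : 0 < T)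
    (t x : ℝ) (ht : t ∈ Set.Ico (0 : ℝ) T) (hx : 0 < x) :
    deriv (fun s => euroPut ρ σ Γ T s x) t
      + (1 / 2) * σ ^ 2 * x ^ 2 * deriv (deriv (fun y => euroPut ρ σ Γ T t y)) x
      + ρ * x * deriv (fun y => euroPut ρ σ Γ T t y) x
      - ρ * euroPut ρ σ Γ T t x = 0 :=
  stmt_9_general ρ σ Γ T hσ hΓ t x ht hx
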